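/- For a simple symmetric random walk on ℤ started at 0, lim_{t→∞} √t · P(S_l ≤ S_t for all 0 ≤ l ≤ t) = √(2/π). -/

import Mathlib

/-!
Splitting off the first step, a `±1` sequence of length `t + 1` has its walk maximal at the final
time exactly when the last `t` steps do and the final height stays nonnegative. So the number
`N(t, j)` of sequences of length `t` whose walk is maximal at the end, at final height `≥ j`,
obeys Pascal's rule `N(t + 1, j) = N(t, j - 1) + N(t, j + 1)` with `N(t, -1) = N(t, 0)`, whence
`N(t, j) = C(t, ⌊(t + j + 1) / 2⌋)`; at `j = 0` the rule closes up by the symmetry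
`C(2k + 1, k) = C(2k + 1, k + 1)`. The probability is therefore `C(t, ⌈t / 2⌉) / 2 ^ t`, and
Wallis' product `W n` satisfies `(C(2n, n) / 4 ^ n) ^ 2 = 1 / ((2n + 1) W n)`, so that
`t (C(t, ⌈t / 2⌉) / 2 ^ t) ^ 2 → 2 / π`.
-/

open MeasureTheory ProbabilityTheory Filter Finset Topology Real

lemma Nat.choose_succ_half (t : ℕ) :
    (t + 1).choose ((t + 2) / 2) = t.choose ((t + 1) / 2) + t.choose ((t + 2) / 2) := by
  obtain ⟨k, rfl | rfl⟩ := t.even_or_odd'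
  · rw [show (2 * k + 2) / 2 = k + 1 by omega, show (2 * k + 1) / 2 = k by omega,
      Nat.choose_succ_succ']
  · rw [show (2 * k + 1 + 2) / 2 = k + 1 by omega, show (2 * k + 1 + 1) / 2 = k + 1 by omega,
      Nat.choose_succ_succ', Nat.choose_symm_half]

namespace SimpleRandomWalk

def signVal (b : Bool) : ℤ := if b then 1 else -1

variable {t : ℕ}

def step (ε : Fin t → Bool) (i : ℕ) : ℤ := if h : i < t then signVal (ε ⟨i, h⟩) else 0

def height (ε : Fin t → Bool) (l : ℕ) : ℤ := ∑ i ∈ range l, step ε i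

@[simp] lemma height_zero (ε : Fin t → Bool) : height ε 0 = 0 := rfl

lemma height_cons_succ (b : Bool) (ε : Fin t → Bool) (l : ℕ) :
    height (Fin.cons b ε : Fin (t + 1) → Bool) (l + 1) = signVal b + height ε l := by
  rw [height, sum_range_succ', add_comm]
  congr 1
  refine sum_congr rfl fun i _ => ?_
  simp only [step, Nat.add_lt_add_iff_right]
  split_ifs <;> rfl

lemma card_eq_card_cons_add_card_cons (s : Finset (Fin (t + 1) → Bool)) :
    #s = #{ε | Fin.cons true ε ∈ s} + #{ε | Fin.cons false ε ∈ s} := by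
  have hs : #s = ∑ η, if η ∈ s then 1 else 0 := by simp
  rw [hs, ← (Fin.consEquiv fun _ => Bool).sum_comp, Fintype.sum_prod_type, Fintype.sum_bool,
    card_filter, card_filter]
  rfl

def maxAtEndAbove (t j : ℕ) : Finset (Fin t → Bool) :=
  {ε | (∀ l ≤ t, height ε l ≤ height ε t) ∧ (j : ℤ) ≤ height ε t}

lemma mem_maxAtEndAbove_zero {ε : Fin t → Bool} :
    ε ∈ maxAtEndAbove t 0 ↔ ∀ l ≤ t, height ε l ≤ height ε t := by
  simp only [maxAtEndAbove, mem_filter, mem_univ, true_and, Nat.cast_zero, and_iff_left_iff_imp]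
  exact fun hmax => hmax 0 t.zero_le

lemma cons_mem_maxAtEndAbove {b : Bool} {ε : Fin t → Bool} {j : ℕ} :
    Fin.cons b ε ∈ maxAtEndAbove (t + 1) j ↔
      (∀ l ≤ t, height ε l ≤ height ε t) ∧ 0 ≤ signVal b + height ε t ∧
        j ≤ signVal b + height ε t := by
  simp only [maxAtEndAbove, mem_filter, mem_univ, true_and, height_cons_succ]
  refine ⟨fun ⟨hmax, hj⟩ => ⟨fun l hl => ?_, ?_, hj⟩, fun ⟨hmax, h0, hj⟩ => ⟨fun l hl => ?_, hj⟩⟩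
  · simpa [height_cons_succ] using hmax (l + 1) (by omega)
  · simpa using hmax 0 (by omega)
  · rcases l with _ | l
    · simpa using h0
    · simpa [height_cons_succ] using hmax l (by omega)

lemma card_maxAtEndAbove_succ (j : ℕ) :
    #(maxAtEndAbove (t + 1) j) = #(maxAtEndAbove t (j - 1)) + #(maxAtEndAbove t (j + 1)) := by
  have hnonneg {ε : Fin t → Bool} (hmax : ∀ l ≤ t, height ε l ≤ height ε t) : 0 ≤ height ε t :=
    hmax 0 t.zero_le
  rw [card_eq_card_cons_add_card_cons]
  congr 2 <;> ext ε <;> rw [mem_filter, cons_mem_maxAtEndAbove] <;>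
    simp only [maxAtEndAbove, mem_filter, mem_univ, true_and, signVal, Bool.false_eq_true,
      ↓reduceIte, and_congr_right_iff] <;>
    intro hmax <;> have := hnonneg hmax <;> omega

lemma card_maxAtEndAbove_zero (j : ℕ) : #(maxAtEndAbove 0 j) = if j = 0 then 1 else 0 := by
  have hheight (ε : Fin 0 → Bool) (l : ℕ) : height ε l = 0 :=
    sum_eq_zero fun i _ => dif_neg i.not_lt_zero
  split_ifs with hj <;> simp [maxAtEndAbove, hheight, hj]

theorem card_maxAtEndAbove (t j : ℕ) : #(maxAtEndAbove t j) = t.choose ((t + j + 1) / 2) := by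
  induction t generalizing j with
  | zero =>
    rcases j with _ | j
    · simp [card_maxAtEndAbove_zero]
    · simp [card_maxAtEndAbove_zero, show (j + 1 + 1) / 2 = j / 2 + 1 by omega]
  | succ t ih =>
    rw [card_maxAtEndAbove_succ, ih, ih]
    rcases j with _ | j
    · exact (Nat.choose_succ_half t).symm
    · rw [show (t + 1 + (j + 1) + 1) / 2 = (t + j + 1) / 2 + 1 by omega,
        show (t + (j + 1 + 1) + 1) / 2 = (t + j + 1) / 2 + 1 by omega, Nat.choose_succ_succ',
        Nat.add_sub_cancel]

variable {Ω : Type*} {X : ℕ → Ω → ℤ}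

def signs (X : ℕ → Ω → ℤ) (t : ℕ) (ω : Ω) : Fin t → Bool := fun i => decide (X i ω = 1)

lemma height_signs {ω : Ω} (hω : ∀ i, X i ω = 1 ∨ X i ω = -1) {l : ℕ} (hl : l ≤ t) :
    height (signs X t ω) l = ∑ i ∈ range l, X i ω := by
  refine sum_congr rfl fun i hi => ?_
  rw [step, dif_pos (by simp at hi; omega)]
  rcases hω i with h | h <;> simp [signs, signVal, h]

variable [MeasurableSpace Ω] {P : Measure Ω} [IsProbabilityMeasure P]

lemma measurable_signs (hX : ∀ i, Measurable (X i)) : Measurable (signs X t) :=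
  measurable_pi_lambda _ fun i =>
    (Measurable.of_discrete (f := fun x : ℤ => decide (x = 1))).comp (hX i)

lemma measure_signs_eq (hX : ∀ i, Measurable (X i)) (hindep : iIndepFun X P)
    (h1 : ∀ i, P {ω | X i ω = 1} = 1 / 2) (ε : Fin t → Bool) :
    P (signs X t ⁻¹' {ε}) = (1 / 2) ^ t := by
  have hpre : signs X t ⁻¹' {ε} = ⋂ i : Fin t, X i ⁻¹' {x | decide (x = 1) = ε i} := by
    ext ω; simp [signs, funext_iff]
  have hfactor (i : Fin t) : P (X i ⁻¹' {x | decide (x = 1) = ε i}) = 1 / 2 := by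
    cases ε i
    · have hc : X i ⁻¹' {x | decide (x = 1) = false} = {ω | X i ω = 1}ᶜ := by ext; simp
      rw [hc, prob_compl_eq_one_sub (s := {ω | X i ω = 1}) (hX i (measurableSet_singleton 1)),
        h1, one_div, ENNReal.one_sub_inv_two]
    · have hc : X i ⁻¹' {x | decide (x = 1) = true} = {ω | X i ω = 1} := by ext; simp
      rw [hc, h1]
  rw [hpre, (hindep.precomp Fin.val_injective).meas_iInter fun i => ⟨_, .of_discrete, rfl⟩,
    Fintype.prod_congr _ _ hfactor, prod_const, card_univ, Fintype.card_fin]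

lemma measure_signs_preimage (hX : ∀ i, Measurable (X i)) (hindep : iIndepFun X P)
    (h1 : ∀ i, P {ω | X i ω = 1} = 1 / 2) (s : Finset (Fin t → Bool)) :
    P (signs X t ⁻¹' s) = #s * (1 / 2) ^ t := by
  rw [← sum_measure_preimage_singleton s fun _ _ => measurable_signs hX .of_discrete,
    sum_congr rfl fun ε _ => measure_signs_eq hX hindep h1 ε, sum_const, nsmul_eq_mul]

lemma ae_eq_one_or_eq_neg_one (hX : ∀ i, Measurable (X i))
    (h1 : ∀ i, P {ω | X i ω = 1} = 1 / 2) (h2 : ∀ i, P {ω | X i ω = -1} = 1 / 2) :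
    ∀ᵐ ω ∂P, ∀ i, X i ω = 1 ∨ X i ω = -1 := by
  refine ae_all_iff.2 fun i => ?_
  have hm (z : ℤ) : MeasurableSet {ω | X i ω = z} := hX i (measurableSet_singleton z)
  have hdisj : Disjoint {ω | X i ω = 1} {ω | X i ω = -1} :=
    Set.disjoint_left.2 fun ω h h' => by simp_all
  have hunion : P ({ω | X i ω = 1} ∪ {ω | X i ω = -1}) = 1 := by
    rw [measure_union hdisj (hm _), h1, h2, ENNReal.add_halves]
  exact (ae_iff_measure_eq ((hm 1).union (hm (-1))).nullMeasurableSet).2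
    (hunion.trans measure_univ.symm)

theorem measure_maxAtEnd (hX : ∀ i, Measurable (X i)) (hindep : iIndepFun X P)
    (h1 : ∀ i, P {ω | X i ω = 1} = 1 / 2) (h2 : ∀ i, P {ω | X i ω = -1} = 1 / 2) (t : ℕ) :
    P {ω | ∀ l ≤ t, ∑ i ∈ range l, X i ω ≤ ∑ i ∈ range t, X i ω}
      = t.choose ((t + 1) / 2) * (1 / 2) ^ t := by
  have hae : {ω | ∀ l ≤ t, ∑ i ∈ range l, X i ω ≤ ∑ i ∈ range t, X i ω}
      =ᵐ[P] signs X t ⁻¹' (maxAtEndAbove t 0 : Set (Fin t → Bool)) := by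
    refine eventuallyEq_set.2 ?_
    filter_upwards [ae_eq_one_or_eq_neg_one hX h1 h2] with ω hω
    simp only [Set.mem_preimage, mem_coe, mem_maxAtEndAbove_zero]
    refine forall₂_congr fun l hl => ?_
    rw [height_signs hω hl, height_signs hω le_rfl]
  rw [measure_congr hae, measure_signs_preimage hX hindep h1, card_maxAtEndAbove, add_zero]

end SimpleRandomWalk

lemma Nat.centralBinom_div_four_pow_sq (n : ℕ) :
    ((n.centralBinom : ℝ) / 4 ^ n) ^ 2 = ((2 * n + 1) * Wallis.W n)⁻¹ := by
  rw [Wallis.W_eq_factorial_ratio, Nat.centralBinom_eq_two_mul_choose,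
    Nat.cast_choose ℝ (by omega : n ≤ 2 * n), show 2 * n - n = n by omega,
    show (2 : ℝ) ^ (4 * n) = (4 ^ n) ^ 2 by
      rw [← pow_mul, show (4 : ℝ) = 2 ^ 2 by norm_num, ← pow_mul]; ring_nf]
  field_simp

lemma Nat.cast_choose_two_mul_add_one (n : ℕ) :
    ((2 * n + 1).choose (n + 1) : ℝ) = (2 * n + 1) / (n + 1) * n.centralBinom := by
  have h := Nat.add_one_mul_choose_eq (2 * n) n
  rw [← Nat.centralBinom_eq_two_mul_choose] at h
  field_simp
  exact_mod_cast h.symm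

lemma tendsto_atTop_of_even_of_odd {α : Type*} {f : ℕ → α} {l : Filter α}
    (heven : Tendsto (fun n => f (2 * n)) atTop l)
    (hodd : Tendsto (fun n => f (2 * n + 1)) atTop l) : Tendsto f atTop l := by
  intro s hs
  obtain ⟨N, hN⟩ := mem_atTop_sets.1 (heven hs)
  obtain ⟨M, hM⟩ := mem_atTop_sets.1 (hodd hs)
  refine mem_atTop_sets.2 ⟨2 * (N + M), fun t ht => ?_⟩
  obtain ⟨k, rfl | rfl⟩ := t.even_or_odd'
  · exact hN k (by omega)
  · exact hM k (by omega)

lemma tendsto_mul_choose_half_div_two_pow_sq :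
    Tendsto (fun t : ℕ => t * ((t.choose ((t + 1) / 2) : ℝ) / 2 ^ t) ^ 2) atTop (𝓝 (2 / π)) := by
  have hW : Tendsto (fun n => (Wallis.W n)⁻¹) atTop (𝓝 (2 / π)) := by
    simpa using Wallis.tendsto_W_nhds_pi_div_two.inv₀ (by positivity)
  have hratio : Tendsto (fun n : ℕ => (n : ℝ) / (n + 1)) atTop (𝓝 1) :=
    tendsto_natCast_div_add_atTop 1
  have h2n : Tendsto (fun n : ℕ => 2 * n) atTop atTop := tendsto_id.const_mul_atTop' two_pos
  have h2n1 : Tendsto (fun n : ℕ => 2 * n + 1) atTop atTop := (tendsto_add_atTop_nat 1).comp h2n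
  apply tendsto_atTop_of_even_of_odd
  · have hlim := (hratio.comp h2n).mul hW
    rw [one_mul] at hlim
    refine hlim.congr fun n => ?_
    have hpow : (2 : ℝ) ^ (2 * n) = 4 ^ n := by rw [pow_mul]; norm_num
    rw [show (2 * n + 1) / 2 = n by omega, ← Nat.centralBinom_eq_two_mul_choose, hpow,
      Nat.centralBinom_div_four_pow_sq]
    simp only [Function.comp_apply]
    push_cast
    field_simp
  · have hlim := ((hratio.comp h2n1).pow 2).mul hW
    rw [one_pow, one_mul] at hlim
    refine hlim.congr fun n => ?_
    have hpow : (2 : ℝ) ^ (2 * n + 1) = 2 * 4 ^ n := by rw [pow_succ, pow_mul]; norm_num; ring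
    rw [show (2 * n + 1 + 1) / 2 = n + 1 by omega, Nat.cast_choose_two_mul_add_one, hpow,
      show (2 * n + 1) / (n + 1) * (n.centralBinom : ℝ) / (2 * 4 ^ n)
        = (2 * n + 1) / (2 * n + 2) * (n.centralBinom / 4 ^ n) by field_simp,
      mul_pow, Nat.centralBinom_div_four_pow_sq]
    simp only [Function.comp_apply]
    push_cast
    field_simp
    ring

lemma tendsto_sqrt_mul_choose_half_div_two_pow :
    Tendsto (fun t : ℕ => √t * ((t.choose ((t + 1) / 2) : ℝ) / 2 ^ t)) atTop (𝓝 √(2 / π)) := by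
  refine tendsto_mul_choose_half_div_two_pow_sq.sqrt.congr fun t => ?_
  rw [Real.sqrt_mul (by positivity), Real.sqrt_sq (by positivity)]

theorem stmt10 {Ω : Type*} [MeasurableSpace Ω] (P : Measure Ω) [IsProbabilityMeasure P]
    (X : ℕ → Ω → ℤ) (hX : ∀ i, Measurable (X i))
    (hindep : iIndepFun X P)
    (h1 : ∀ i, P {ω | X i ω = 1} = 1/2)
    (h2 : ∀ i, P {ω | X i ω = -1} = 1/2)
    (S : ℕ → Ω → ℤ) (hS : ∀ n ω, S n ω = ∑ i ∈ Finset.range n, X i ω) :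
    Tendsto (fun t : ℕ =>
        Real.sqrt t * (P {ω | ∀ l ≤ t, S l ω ≤ S t ω}).toReal)
      atTop (nhds (Real.sqrt (2 / Real.pi))) := by
  have hprob (t : ℕ) :
      (P {ω | ∀ l ≤ t, S l ω ≤ S t ω}).toReal = t.choose ((t + 1) / 2) / 2 ^ t := by
    simp only [hS]
    rw [SimpleRandomWalk.measure_maxAtEnd hX hindep h1 h2 t]
    simp [div_eq_mul_inv]
  simpa only [hprob] using tendsto_sqrt_mul_choose_half_div_two_pow
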